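/- arXiv:math/0608008 — 8 statements merged into one kernel-verified Lean document; each statement's English description precedes it below -/
import Mathlib

section
/- Let A be a UFD and B a flat, torsion-free ring extension of A such that A ∩ B* = A* (an element of A is invertible in B iff it is invertible in A). Then B ∩ Frac(A) = A, i.e., any element of B that can be written as a fraction a/b with a, b ∈ A, b ≠ 0, already lies in A. -/
open scoped TensorProduct

/-- Bass's lemma: if `B` is a flat (torsion-free) extension domain of a UFD `A`
such that an element of `A` is a unit in `B` iff it is a unit in `A`, then
`B ∩ Frac(A) = A`: any element of `B` expressible as a fraction of elements of `A`
lies in (the image of) `A`. -/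
theorem stmt_0 (A B : Type*) [CommRing A] [IsDomain A] [UniqueFactorizationMonoid A]
    [CommRing B] [IsDomain B] [Algebra A B] [Module.Flat A B]
    (hinj : Function.Injective (algebraMap A B))
    (hunits : ∀ a : A, IsUnit (algebraMap A B a) ↔ IsUnit a)
    (x : B) (a c : A) (hc : c ≠ 0) (hx : x * algebraMap A B c = algebraMap A B a) :
    ∃ a' : A, x = algebraMap A B a' := by
  classical
  -- reduce the fraction: a = g * a', c = g * c' with a', c' coprime
  obtain ⟨a', c', g, hcop, hga, hgc⟩ :=
    UniqueFactorizationMonoid.exists_reduced_factors' a c hc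
  have hg : g ≠ 0 := by rintro rfl; exact hc (by rw [← hgc, zero_mul])
  have hc' : c' ≠ 0 := by rintro rfl; exact hc (by rw [← hgc, mul_zero])
  have hmapg : algebraMap A B g ≠ 0 := fun h => hg (hinj (by simpa using h))
  have hmapc' : algebraMap A B c' ≠ 0 := fun h => hc' (hinj (by simpa using h))
  -- cancel g : x * c' = a' in B
  have hx' : x * algebraMap A B c' = algebraMap A B a' := by
    rw [← hga, ← hgc, map_mul, map_mul] at hx
    have : algebraMap A B g * (x * algebraMap A B c') = algebraMap A B g * algebraMap A B a' := by
      linear_combination hx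
    exact mul_left_cancel₀ hmapg this
  -- the exact sequence A → A × A → A
  let f : A →ₗ[A] A × A := LinearMap.prod (c' • LinearMap.id) (-(a' • LinearMap.id))
  let g2 : A × A →ₗ[A] A := a' • LinearMap.fst A A A + c' • LinearMap.snd A A A
  have hf : ∀ w : A, f w = (c' * w, -(a' * w)) := fun w => by
    simp [f, smul_eq_mul]
  have hg2 : ∀ p : A × A, g2 p = a' * p.1 + c' * p.2 := fun p => by
    simp [g2, smul_eq_mul]
  have hexact : Function.Exact f g2 := by
    intro p
    constructor
    · intro hp
      have hp0 : a' * p.1 + c' * p.2 = 0 := by rw [← hg2]; exact hp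
      -- a' * p.1 + c' * p.2 = 0 means c' ∣ a' * p.1, hence c' ∣ p.1
      have hdvd : c' ∣ a' * p.1 := ⟨-p.2, by linear_combination hp0⟩
      have hdvd1 : c' ∣ p.1 :=
        UniqueFactorizationMonoid.dvd_of_dvd_mul_right_of_no_prime_factors hc'
          (fun {d} hdc hda hpr => hpr.not_unit (hcop hda hdc)) hdvd
      obtain ⟨w, hw⟩ := hdvd1
      refine ⟨w, ?_⟩
      have hp2 : p.2 = -(a' * w) := by
        have h2 : c' * p.2 = c' * (-(a' * w)) := by linear_combination hp0 - a' * hw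
        exact mul_left_cancel₀ hc' h2
      rw [hf w, Prod.ext_iff]
      exact ⟨hw.symm, hp2.symm⟩
    · rintro ⟨w, rfl⟩
      rw [hg2, hf]
      ring
  -- tensor with B
  have hBexact : Function.Exact (f.lTensor B) (g2.lTensor B) :=
    Module.Flat.lTensor_exact B hexact
  -- the element 1 ⊗ (1,0) - x ⊗ (0,1) is killed by g2 ⊗ B
  set e : B ⊗[A] (A × A) := 1 ⊗ₜ (1, 0) - x ⊗ₜ (0, 1) with he_def
  have he : g2.lTensor B e = 0 := by
    have h1 : g2.lTensor B e = 1 ⊗ₜ[A] a' - x ⊗ₜ[A] c' := by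
      rw [he_def, map_sub, LinearMap.lTensor_tmul, LinearMap.lTensor_tmul]
      rw [show g2 (1, 0) = a' by rw [hg2]; ring, show g2 (0, 1) = c' by rw [hg2]; ring]
    have h2 : (TensorProduct.rid A B) (1 ⊗ₜ[A] a' - x ⊗ₜ[A] c') = 0 := by
      rw [map_sub, TensorProduct.rid_tmul, TensorProduct.rid_tmul, Algebra.smul_def,
        Algebra.smul_def]
      linear_combination -hx'
    have h3 : (TensorProduct.rid A B) (g2.lTensor B e) = 0 := by rw [h1]; exact h2
    exact (TensorProduct.rid A B).map_eq_zero_iff.mp h3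
  obtain ⟨z, hz⟩ := (hBexact e).mp he
  -- z ∈ B ⊗ A, so z = w ⊗ 1 with w = rid z
  set w : B := TensorProduct.rid A B z with hwdef
  have hz' : z = w ⊗ₜ[A] (1 : A) := by
    have h4 : (TensorProduct.rid A B).symm w = w ⊗ₜ[A] (1 : A) :=
      TensorProduct.rid_symm_apply w
    rw [← h4, hwdef, LinearEquiv.symm_apply_apply]
  rw [hz'] at hz
  -- apply first projection tensored with B to conclude c' * w = 1 in B
  have hfst' : algebraMap A B c' * w = 1 := by
    have lhs : (TensorProduct.rid A B) ((LinearMap.fst A A A).lTensor B (w ⊗ₜ[A] f 1)) =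
        algebraMap A B c' * w := by
      rw [hf, LinearMap.lTensor_tmul]
      simp [Algebra.smul_def]
    have rhs : (TensorProduct.rid A B) ((LinearMap.fst A A A).lTensor B e) = 1 := by
      rw [he_def, map_sub, LinearMap.lTensor_tmul, LinearMap.lTensor_tmul]
      simp
    have hz2 : w ⊗ₜ[A] f 1 = e := by rw [← LinearMap.lTensor_tmul]; exact hz
    rw [← lhs, ← rhs, hz2]
  -- so c' is a unit in B, hence in A
  have hcu : IsUnit c' := (hunits c').mp (IsUnit.of_mul_eq_one _ hfst')
  obtain ⟨u, hu⟩ := hcu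
  refine ⟨a' * ↑u⁻¹, ?_⟩
  apply mul_right_cancel₀ hmapc'
  rw [hx', ← map_mul]
  congr 1
  rw [mul_assoc, ← hu]
  simp
end

section
/- Let A be a commutative ring, A[T] the polynomial ring in one variable, and P ∈ A[T] a monic polynomial of positive degree. If B = A[T]/(P) satisfies Ω_{B/A} = 0, then the discriminant of P is a unit in A. Conversely, if the discriminant of P is a unit in A, then Ω_{B/A} = 0. -/
open Polynomial

/-- The discriminant of a monic polynomial `P` over a commutative ring `A`, defined (as usual,
via the resultant of `P` and `P'`) by the formula
`disc P = (-1)^(n(n-1)/2) · Norm_{(A[T]/(P))/A}(P'(t))`, where `t` is the class of `T`. -/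
noncomputable def polyDiscriminant {A : Type*} [CommRing A] (P : A[X]) : A :=
  (-1 : A) ^ (P.natDegree * (P.natDegree - 1) / 2) *
    Algebra.norm A (AdjoinRoot.mk P (derivative P))


section NormUnit

variable {A B : Type*} [CommRing A] [CommRing B] [Algebra A B]

theorem isUnit_norm_iff_aux {ι : Type*} [Fintype ι] [DecidableEq ι] (b : Module.Basis ι A B)
    (x : B) : IsUnit (Algebra.norm A x) ↔ IsUnit x := by
  constructor
  · intro h
    have hdet : IsUnit (LinearMap.toMatrix b b (Algebra.lmul A B x)).det := by
      rwa [LinearMap.det_toMatrix, ← Algebra.norm_apply]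
    let e := LinearEquiv.ofIsUnitDet hdet
    refine IsUnit.of_mul_eq_one (a := x) (e.symm 1) ?_
    have h1 : e (e.symm 1) = 1 := e.apply_symm_apply 1
    have h2 : e (e.symm 1) = x * e.symm 1 := by
      simp [e, LinearEquiv.ofIsUnitDet_apply]
    rw [← h2, h1]
  · intro h
    rw [Algebra.norm_apply]
    exact LinearMap.isUnit_det _ (h.map (Algebra.lmul A B))

end NormUnit

section Main

variable {A : Type*} [CommRing A] (P : A[X])

theorem subsingleton_of_unit_deriv (h : IsUnit (AdjoinRoot.mk P (derivative P))) :
    Subsingleton (Ω[AdjoinRoot P⁄A]) := by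
  have hroot : KaehlerDifferential.D A (AdjoinRoot P) (AdjoinRoot.root P) = 0 := by
    have h0 : (KaehlerDifferential.D A (AdjoinRoot P)) ((aeval (AdjoinRoot.root P)) P) = 0 := by
      rw [AdjoinRoot.aeval_eq, AdjoinRoot.mk_self, map_zero]
    rw [Derivation.map_aeval, AdjoinRoot.aeval_eq] at h0
    obtain ⟨v, hv⟩ := h.exists_left_inv
    calc KaehlerDifferential.D A (AdjoinRoot P) (AdjoinRoot.root P)
        = (v * AdjoinRoot.mk P (derivative P)) •
            KaehlerDifferential.D A (AdjoinRoot P) (AdjoinRoot.root P) := by rw [hv, one_smul]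
      _ = v • ((AdjoinRoot.mk P (derivative P)) •
            KaehlerDifferential.D A (AdjoinRoot P) (AdjoinRoot.root P)) := mul_smul _ _ _
      _ = 0 := by rw [h0, smul_zero]
  suffices hle : (⊤ : Submodule (AdjoinRoot P) (Ω[AdjoinRoot P⁄A])) ≤ ⊥ by
    exact (subsingleton_iff_forall_eq 0).mpr fun y ↦ hle trivial
  rw [← KaehlerDifferential.span_range_derivation, Submodule.span_le]
  rintro _ ⟨x, rfl⟩
  obtain ⟨q, rfl⟩ := AdjoinRoot.mk_surjective x
  rw [SetLike.mem_coe, Submodule.mem_bot, ← AdjoinRoot.aeval_eq, Derivation.map_aeval, hroot,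
    smul_zero]

/-- The underlying linear map of the canonical derivation. -/
noncomputable def auxLinear :
    AdjoinRoot P →ₗ[A] (AdjoinRoot P ⧸ Ideal.span {AdjoinRoot.mk P (derivative P)}) :=
  (Submodule.liftQ ((Ideal.span {P}).restrictScalars A)
    (((Ideal.Quotient.mkₐ A (Ideal.span {AdjoinRoot.mk P (derivative P)})).toLinearMap.comp
      (Ideal.Quotient.mkₐ A (Ideal.span {P})).toLinearMap).comp (derivative (R := A)))
    (by
      intro x hx
      obtain ⟨r, hr⟩ := Ideal.mem_span_singleton'.mp hx
      subst hr
      show Ideal.Quotient.mk (Ideal.span {AdjoinRoot.mk P (derivative P)})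
        (AdjoinRoot.mk P (derivative (r * P))) = 0
      rw [derivative_mul, map_add, map_mul, map_mul]
      have h0 : AdjoinRoot.mk P P = 0 :=
        Ideal.Quotient.eq_zero_iff_mem.mpr (Ideal.subset_span rfl)
      rw [h0, mul_zero, zero_add, Ideal.Quotient.eq_zero_iff_mem]
      exact Ideal.mul_mem_left _ _ (Ideal.subset_span rfl))).comp
    (Submodule.Quotient.restrictScalarsEquiv A
      ((Ideal.span {P} : Ideal A[X]))).symm.toLinearMap

theorem auxLinear_mk (q : A[X]) :
    auxLinear P (AdjoinRoot.mk P q) =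
      Ideal.Quotient.mk (Ideal.span {AdjoinRoot.mk P (derivative P)})
        (AdjoinRoot.mk P (derivative q)) := rfl

/-- The canonical derivation from `AdjoinRoot P` to `AdjoinRoot P ⧸ (P'(t))`. -/
noncomputable def auxDerivation :
    Derivation A (AdjoinRoot P)
      (AdjoinRoot P ⧸ Ideal.span {AdjoinRoot.mk P (derivative P)}) where
  toLinearMap := auxLinear P
  map_one_eq_zero' := by
    have h1 : (1 : AdjoinRoot P) = AdjoinRoot.mk P 1 := (map_one _).symm
    show auxLinear P 1 = 0
    rw [h1, auxLinear_mk, derivative_one, map_zero, map_zero]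
  leibniz' := by
    intro a b
    obtain ⟨q, rfl⟩ := AdjoinRoot.mk_surjective a
    obtain ⟨r, rfl⟩ := AdjoinRoot.mk_surjective b
    show auxLinear P _ = _ • auxLinear P _ + _ • auxLinear P _
    rw [← map_mul, auxLinear_mk, auxLinear_mk, auxLinear_mk, derivative_mul,
      mul_comm (derivative q) r, map_add, map_add, Algebra.smul_def, Algebra.smul_def,
      Ideal.Quotient.algebraMap_eq, ← map_mul, ← map_mul, ← map_mul, ← map_mul]
    exact add_comm _ _

theorem unit_deriv_of_subsingleton (h : Subsingleton (Ω[AdjoinRoot P⁄A])) :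
    IsUnit (AdjoinRoot.mk P (derivative P)) := by
  have key : auxDerivation P (AdjoinRoot.root P) = 0 := by
    have hc := Derivation.liftKaehlerDifferential_comp (auxDerivation P)
    have h2 : auxDerivation P (AdjoinRoot.root P) =
        (auxDerivation P).liftKaehlerDifferential
          (KaehlerDifferential.D A (AdjoinRoot P) (AdjoinRoot.root P)) :=
      (Derivation.congr_fun hc (AdjoinRoot.root P)).symm
    rw [h2, Subsingleton.elim (KaehlerDifferential.D A (AdjoinRoot P) (AdjoinRoot.root P)) 0,
      map_zero]
  have hroot : auxDerivation P (AdjoinRoot.root P) =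
      Ideal.Quotient.mk (Ideal.span {AdjoinRoot.mk P (derivative P)}) 1 := by
    show auxLinear P (AdjoinRoot.root P) = _
    rw [AdjoinRoot.root, auxLinear_mk, derivative_X, map_one]
  rw [hroot] at key
  rw [← Ideal.span_singleton_eq_top, Ideal.eq_top_iff_one]
  simpa using Ideal.Quotient.eq_zero_iff_mem.mp key

end Main


/-- For `P ∈ A[T]` monic of positive degree and `B = A[T]/(P)`: the Kähler differentials
`Ω_{B/A}` vanish if and only if the discriminant of `P` is a unit of `A`. -/
theorem stmt_5 (A : Type*) [CommRing A] (P : A[X]) (hmonic : P.Monic)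
    (hdeg : 0 < P.natDegree) :
    IsUnit (polyDiscriminant P) ↔ Subsingleton (Ω[AdjoinRoot P⁄A]) := by
  classical
  have b := (AdjoinRoot.powerBasis' hmonic).basis
  rw [polyDiscriminant]
  rw [IsUnit.mul_iff, isUnit_norm_iff_aux b]
  constructor
  · intro h
    exact subsingleton_of_unit_deriv P h.2
  · intro h
    exact ⟨(isUnit_one.neg).pow _, unit_deriv_of_subsingleton P h⟩
end

section
/- Let K be a domain, B = K[X₁,…,X_n] a polynomial algebra in n ≥ 1 variables, and F₁, …, F_n elements of B that are algebraically independent over K. Let A be the K-subalgebra of B generated by F₁, …, F_n. Then Frac(B) is a finite field extension of Frac(A), and its separable degree is at most ∏_{i=1}^n deg F_i. -/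
open MvPolynomial


private lemma aux_bern (D t : ℕ) : D ^ (t+1) + (t+1) * D ^ t ≤ (D+1) ^ (t+1) := by
  induction t with
  | zero => simp [pow_succ]
  | succ t ih =>
    have h2 : (D ^ (t+1) + (t+1) * D ^ t) * (D+1) ≤ (D+1)^(t+1) * (D+1) :=
      Nat.mul_le_mul_right _ ih
    calc D ^ (t+2) + (t+2) * D ^ (t+1)
        ≤ (D ^ (t+1) + (t+1) * D ^ t) * (D+1) := by
          have e1 : D ^ (t+2) = D^(t+1) * D := pow_succ D (t+1)
          have e2 : D ^ (t+1) = D^t * D := pow_succ D t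
          nlinarith [Nat.zero_le (D^t)]
      _ ≤ (D+1)^(t+1) * (D+1) := h2
      _ = (D+1)^(t+2) := (pow_succ _ _).symm

private lemma aux_two_mul (D : ℕ) (hD : 1 ≤ D) : 2 * D ^ D ≤ (D+1) ^ D := by
  obtain ⟨e, rfl⟩ : ∃ e, D = e + 1 := ⟨D - 1, by omega⟩
  calc 2 * (e+1)^(e+1) = (e+1)^(e+1) + (e+1)*(e+1)^e := by rw [pow_succ]; ring
    _ ≤ (e+1+1)^(e+1) := aux_bern (e+1) e

private lemma aux_nat (e : ℕ) : ∃ u : ℕ, e * u + 1 < 2 ^ u := by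
  refine ⟨2 * (2 * e + 1), ?_⟩
  have h1 : 2 * e + 2 ≤ 2 ^ (2 * e + 1) := Nat.lt_two_pow_self (n := 2*e+1)
  have h2 : (2*e+2) * (2*e+2) ≤ 2 ^ (2*e+1) * 2 ^ (2*e+1) := Nat.mul_le_mul h1 h1
  have h3 : 2 ^ (2*e+1) * 2 ^ (2*e+1) = 2 ^ (2 * (2*e+1)) := by
    rw [← pow_add]; ring_nf
  nlinarith

private lemma aux_card_le_of_span {R M : Type*} [CommRing R] [Nontrivial R] [AddCommGroup M]
    [Module R M] {ι : Type*} [Fintype ι] {u : ι → M} (hu : LinearIndependent R u)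
    (S : Finset M) (hS : ∀ i, u i ∈ Submodule.span R (S : Set M)) :
    Fintype.card ι ≤ S.card := by
  set W := Submodule.span R (S : Set M)
  have h1 : LinearIndependent R (fun i => (⟨u i, hS i⟩ : W)) :=
    LinearIndependent.of_comp W.subtype (by exact hu)
  have h2 := h1.cardinal_lift_le_rank
  have h3 : Module.rank R W ≤ (S.card : Cardinal) := by
    refine (rank_span_le _).trans ?_
    simp [Cardinal.mk_coe_finset]
  have h4 := h2.trans (Cardinal.lift_le.mpr h3)
  rw [Cardinal.mk_fintype, Cardinal.lift_natCast, Cardinal.lift_natCast] at h4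
  exact_mod_cast h4

private lemma aux_mem_span_monomials {K : Type*} [CommSemiring K] {n : ℕ}
    [DecidableEq (MvPolynomial (Fin n) K)]
    {p : MvPolynomial (Fin n) K} {S : Finset (Fin n →₀ ℕ)} (h : ∀ α ∈ p.support, α ∈ S) :
    p ∈ Submodule.span K
      ((S.image fun α => (monomial α (1:K) : MvPolynomial (Fin n) K)) : Set (MvPolynomial (Fin n) K)) := by
  nth_rewrite 1 [MvPolynomial.as_sum p]
  refine Submodule.sum_mem _ fun α hα => ?_
  have : (monomial α (coeff α p) : MvPolynomial (Fin n) K) = (coeff α p) • monomial α 1 := by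
    rw [smul_monomial, smul_eq_mul, mul_one]
  rw [this]
  exact Submodule.smul_mem _ _ (Submodule.subset_span
    (Finset.mem_coe.mpr (Finset.mem_image_of_mem _ (h α hα))))

private lemma aux_key {K : Type*} [CommRing K] [IsDomain K] {n : ℕ} (hn : 0 < n)
    (F : Fin n → MvPolynomial (Fin n) K) (hF : AlgebraicIndependent K F)
    (hdpos : ∀ i, 0 < (F i).totalDegree)
    (E : Subfield (FractionRing (MvPolynomial (Fin n) K)))
    (hmemE : ∀ pol : MvPolynomial (Fin n) K,
      algebraMap (MvPolynomial (Fin n) K) (FractionRing (MvPolynomial (Fin n) K)) (aeval F pol) ∈ E)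
    (s : Finset (FractionRing (MvPolynomial (Fin n) K)))
    (hs : LinearIndependent (↥E) fun i : ↥s => (i : FractionRing (MvPolynomial (Fin n) K))) :
    s.card ≤ ∏ i, (F i).totalDegree := by
  classical
  set D : ℕ := ∏ i, (F i).totalDegree with hD
  have hD1 : 1 ≤ D := Finset.one_le_prod' fun i _ => hdpos i
  by_contra hlt
  push_neg at hlt
  have hφinj : Function.Injective (algebraMap (MvPolynomial (Fin n) K)
    (FractionRing (MvPolynomial (Fin n) K))) := IsFractionRing.injective _ _
  -- clear denominators
  obtain ⟨bd, hbd⟩ := IsLocalization.exist_integer_multiples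
    (nonZeroDivisors (MvPolynomial (Fin n) K)) (Finset.univ : Finset ↥s)
    (fun i : ↥s => (i : FractionRing (MvPolynomial (Fin n) K)))
  choose q hq using fun i : ↥s => hbd i (Finset.mem_univ i)
  have hbd0 : algebraMap (MvPolynomial (Fin n) K) (FractionRing (MvPolynomial (Fin n) K))
      (bd : MvPolynomial (Fin n) K) ≠ 0 := fun h =>
    nonZeroDivisors.coe_ne_zero bd (hφinj (h.trans (map_zero _).symm))
  have hmul : LinearIndependent (↥E) fun i : ↥s =>
      (algebraMap _ (FractionRing (MvPolynomial (Fin n) K)) (bd : MvPolynomial (Fin n) K))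
        * (i : FractionRing (MvPolynomial (Fin n) K)) := by
    have hker : LinearMap.ker (LinearMap.mulLeft (↥E)
        (algebraMap _ (FractionRing (MvPolynomial (Fin n) K)) (bd : MvPolynomial (Fin n) K))) = ⊥ :=
      LinearMap.ker_eq_bot.mpr (mul_right_injective₀ hbd0)
    simpa [Function.comp_def] using hs.map' _ hker
  have hli2 : LinearIndependent (↥E) fun i : ↥s =>
      algebraMap (MvPolynomial (Fin n) K) (FractionRing (MvPolynomial (Fin n) K)) (q i) := by
    have he : (fun i : ↥s =>
        algebraMap (MvPolynomial (Fin n) K) (FractionRing (MvPolynomial (Fin n) K)) (q i))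
        = fun i : ↥s =>
          (algebraMap _ (FractionRing (MvPolynomial (Fin n) K)) (bd : MvPolynomial (Fin n) K))
            * (i : FractionRing (MvPolynomial (Fin n) K)) := funext fun i => by
      rw [hq i, Algebra.smul_def]
    rw [he]; exact hmul
  -- K-linear independence of the products (monomials in F) * q i
  have hWli : LinearIndependent K (fun x : (Fin n →₀ ℕ) × ↥s =>
      (aeval F (monomial x.1 (1:K)) * q x.2 : MvPolynomial (Fin n) K)) := by
    rw [linearIndependent_iff']
    intro t g hsum x hx
    set P : ↥s → MvPolynomial (Fin n) K := fun i =>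
      ∑ y ∈ t.filter (fun y => y.2 = i), monomial y.1 (g y) with hP
    have hsplit : ∑ i : ↥s, (aeval F (P i)) * q i = 0 := by
      have e1 : ∀ i : ↥s, (aeval F (P i)) * q i
          = ∑ y ∈ t.filter (fun y => y.2 = i), g y • (aeval F (monomial y.1 (1:K)) * q y.2) := by
        intro i
        rw [hP, map_sum, Finset.sum_mul]
        refine Finset.sum_congr rfl fun y hy => ?_
        obtain ⟨hyt, hyi⟩ := Finset.mem_filter.mp hy
        have hm : (monomial y.1 (g y) : MvPolynomial (Fin n) K) = g y • monomial y.1 1 := by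
          rw [smul_monomial, smul_eq_mul, mul_one]
        rw [hm, map_smul, smul_mul_assoc, hyi]
      calc ∑ i : ↥s, (aeval F (P i)) * q i
          = ∑ i : ↥s, ∑ y ∈ t.filter (fun y => y.2 = i),
              g y • (aeval F (monomial y.1 (1:K)) * q y.2) :=
            Finset.sum_congr rfl (fun i _ => e1 i)
        _ = ∑ y ∈ t, g y • (aeval F (monomial y.1 (1:K)) * q y.2) :=
            Finset.sum_fiberwise_of_maps_to (fun y _ => Finset.mem_univ y.2) _
        _ = 0 := hsum
    have himg : ∀ i : ↥s,
        algebraMap (MvPolynomial (Fin n) K) (FractionRing (MvPolynomial (Fin n) K))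
          (aeval F (P i)) = 0 := by
      have h2 : ∑ i : ↥s, (⟨algebraMap _ _ (aeval F (P i)), hmemE _⟩ : ↥E) •
          (algebraMap (MvPolynomial (Fin n) K) (FractionRing (MvPolynomial (Fin n) K)) (q i))
            = 0 := by
        have h3 := congrArg
          (algebraMap (MvPolynomial (Fin n) K) (FractionRing (MvPolynomial (Fin n) K))) hsplit
        rw [map_sum, map_zero] at h3
        rw [← h3]
        exact Finset.sum_congr rfl fun i _ => by rw [map_mul]; rfl
      intro i
      have h4 := linearIndependent_iff'.mp hli2 Finset.univ _ h2 i (Finset.mem_univ i)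
      exact congrArg Subtype.val h4
    have hP0 : ∀ i : ↥s, P i = 0 := fun i => hF (by
      rw [map_zero]
      exact hφinj (by rw [map_zero]; exact himg i))
    have hcoeff : coeff x.1 (P x.2) = g x := by
      rw [hP]
      simp only
      rw [MvPolynomial.coeff_sum]
      have hsingle := Finset.sum_eq_single_of_mem (s := t.filter fun y => y.2 = x.2)
        (f := fun y => coeff x.1 (monomial y.1 (g y))) x
        (Finset.mem_filter.mpr ⟨hx, rfl⟩) (fun y hy hne => by
          obtain ⟨hyt, hy2⟩ := Finset.mem_filter.mp hy
          simp only [coeff_monomial]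
          rw [if_neg]
          intro h1; exact hne (Prod.ext h1 hy2))
      simpa [coeff_monomial] using hsingle
    rw [← hcoeff, hP0, coeff_zero]
  -- combinatorics
  set c : ℕ := Finset.univ.sup (fun i : ↥s => (q i).totalDegree) with hc
  set wt : (Fin n →₀ ℕ) → ℕ := fun β => β.sum fun j k => k * (F j).totalDegree with hwt
  set dg : (Fin n →₀ ℕ) → ℕ := fun β => β.sum fun _ k => k with hdg
  have hwt_eq : ∀ β : Fin n →₀ ℕ, wt β = ∑ j, β j * (F j).totalDegree := fun β =>
    Finsupp.sum_fintype _ _ (fun j => by simp)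
  have hdg_eq : ∀ β : Fin n →₀ ℕ, dg β = ∑ j, β j := fun β =>
    Finsupp.sum_fintype _ _ (fun j => rfl)
  set box : ℕ → Finset (Fin n →₀ ℕ) := fun m =>
    Finset.Iic (Finsupp.equivFunOnFinite.symm fun _ => m) with hbox_def
  have hbox : ∀ (m : ℕ) (β : Fin n →₀ ℕ), (∀ j, β j ≤ m) → β ∈ box m := fun m β h =>
    Finset.mem_Iic.mpr (Finsupp.le_def.mpr fun j => by
      simpa [Finsupp.coe_equivFunOnFinite_symm] using h j)
  set T : ℕ → Finset (Fin n →₀ ℕ) := fun m => (box m).filter (fun β => wt β ≤ m) with hT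
  set Mo : ℕ → Finset (Fin n →₀ ℕ) := fun m => (box m).filter (fun β => dg β ≤ m) with hMo
  have hTmem : ∀ (m : ℕ) (β : Fin n →₀ ℕ), wt β ≤ m → β ∈ T m := by
    intro m β h
    refine Finset.mem_filter.mpr ⟨hbox m β fun j => ?_, h⟩
    have h1 : β j * (F j).totalDegree ≤ wt β := by
      rw [hwt_eq]
      exact Finset.single_le_sum (f := fun j => β j * (F j).totalDegree)
        (fun _ _ => Nat.zero_le _) (Finset.mem_univ j)
    have h2 : β j ≤ β j * (F j).totalDegree := Nat.le_mul_of_pos_right _ (hdpos j)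
    omega
  have hMomem : ∀ (m : ℕ) (β : Fin n →₀ ℕ), dg β ≤ m → β ∈ Mo m := by
    intro m β h
    refine Finset.mem_filter.mpr ⟨hbox m β fun j => ?_, h⟩
    have h1 : β j ≤ dg β := by
      rw [hdg_eq]
      exact Finset.single_le_sum (f := fun j => β j) (fun _ _ => Nat.zero_le _)
        (Finset.mem_univ j)
    omega
  -- (i) the span inequality
  have hspan : ∀ m : ℕ, s.card * (T m).card ≤ (Mo (m + c)).card := by
    intro m
    have hdegW : ∀ x : (Fin n →₀ ℕ) × ↥s, x.1 ∈ T m →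
        (aeval F (monomial x.1 (1:K)) * q x.2 : MvPolynomial (Fin n) K).totalDegree ≤ m + c := by
      intro x hx
      have h1 := totalDegree_mul (aeval F (monomial x.1 (1:K))) (q x.2)
      have h2 : (aeval F (monomial x.1 (1:K))).totalDegree ≤ wt x.1 := by
        rw [aeval_monomial, map_one, one_mul]
        refine le_trans (totalDegree_finset_prod _ _) ?_
        exact Finset.sum_le_sum fun j _ => totalDegree_pow _ _
      have h3 : (q x.2).totalDegree ≤ c := by
        rw [hc]
        exact Finset.le_sup (f := fun i : ↥s => (q i).totalDegree) (Finset.mem_univ x.2)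
      have h4 := (Finset.mem_filter.mp hx).2
      omega
    have hcard := aux_card_le_of_span (R := K)
      (u := fun y : ↥((T m) ×ˢ (Finset.univ : Finset ↥s)) =>
        (aeval F (monomial (y : (Fin n →₀ ℕ) × ↥s).1 (1:K))
          * q (y : (Fin n →₀ ℕ) × ↥s).2 : MvPolynomial (Fin n) K))
      (hWli.comp _ Subtype.val_injective)
      ((Mo (m+c)).image fun α => (monomial α (1:K) : MvPolynomial (Fin n) K))
      (fun y => by
        apply aux_mem_span_monomials
        intro α hα
        apply hMomem
        have h5 := le_totalDegree (p := (aeval F (monomial (y : (Fin n →₀ ℕ) × ↥s).1 (1:K))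
          * q (y : (Fin n →₀ ℕ) × ↥s).2 : MvPolynomial (Fin n) K)) hα
        have h6 := hdegW _ (Finset.mem_product.mp y.2).1
        rw [hdg_eq]
        have h7 : (α.sum fun _ e => e) = ∑ j, α j := Finsupp.sum_fintype _ _ (fun j => rfl)
        omega)
    rw [Fintype.card_coe, Finset.card_product, Finset.card_univ, Fintype.card_coe] at hcard
    calc s.card * (T m).card = (T m).card * s.card := mul_comm _ _
      _ ≤ ((Mo (m+c)).image fun α => (monomial α (1:K) : MvPolynomial (Fin n) K)).card := hcard
      _ ≤ (Mo (m+c)).card := Finset.card_image_le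
  -- (ii) the fiber inequality
  have hfiber : ∀ m : ℕ, (Mo m).card ≤ D * (T m).card := by
    intro m
    set f : (Fin n →₀ ℕ) → (Fin n →₀ ℕ) := fun α =>
      Finsupp.equivFunOnFinite.symm fun j => α j / (F j).totalDegree with hf
    have happ : ∀ (α : Fin n →₀ ℕ) (j : Fin n), f α j = α j / (F j).totalDegree := fun α j => by
      simp [hf, Finsupp.coe_equivFunOnFinite_symm]
    have hmaps : ∀ α ∈ Mo m, f α ∈ T m := by
      intro α hα
      apply hTmem
      rw [hwt_eq]
      calc ∑ j, f α j * (F j).totalDegree ≤ ∑ j, α j := Finset.sum_le_sum fun j _ => by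
            rw [happ]; exact Nat.div_mul_le_self _ _
        _ = dg α := (hdg_eq α).symm
        _ ≤ m := (Finset.mem_filter.mp hα).2
    have h1 : (Mo m).card ≤ D * ((Mo m).image f).card := by
      apply Finset.card_le_mul_card_image
      intro β hβ
      have hDcard : D = Fintype.card (∀ j : Fin n, Fin ((F j).totalDegree)) := by
        rw [Fintype.card_pi]
        simp [hD]
      rw [hDcard, ← Finset.card_univ]
      apply Finset.card_le_card_of_injOn
        (fun α => (fun j => (⟨α j % (F j).totalDegree, Nat.mod_lt _ (hdpos j)⟩ : Fin _)))
      · exact fun α _ => Finset.mem_univ _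
      · intro α hα α' hα' hgg
        have hfa : f α = β := (Finset.mem_filter.mp (Finset.mem_coe.mp hα)).2
        have hfa' : f α' = β := (Finset.mem_filter.mp (Finset.mem_coe.mp hα')).2
        ext j
        have e1 : α j % (F j).totalDegree = α' j % (F j).totalDegree := by
          have := congrFun hgg j
          exact congrArg Fin.val this
        have e2 : α j / (F j).totalDegree = α' j / (F j).totalDegree := by
          rw [← happ, ← happ, hfa, hfa']
        have e3 := Nat.div_add_mod (α j) ((F j).totalDegree)
        have e4 := Nat.div_add_mod (α' j) ((F j).totalDegree)
        rw [e2] at e3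
        omega
    calc (Mo m).card ≤ D * ((Mo m).image f).card := h1
      _ ≤ D * (T m).card := Nat.mul_le_mul_left _
        (Finset.card_le_card (Finset.image_subset_iff.mpr hmaps))
  -- upper bound for Mo
  have hMup : ∀ m : ℕ, (Mo m).card ≤ (m+1)^n := by
    intro m
    have hcb : ∀ α, α ∈ Mo m → ∀ j, α j < m + 1 := by
      intro α hα j
      have h1 : α j ≤ dg α := by
        rw [hdg_eq]
        exact Finset.single_le_sum (f := fun j => α j) (fun _ _ => Nat.zero_le _)
          (Finset.mem_univ j)
      have h2 := (Finset.mem_filter.mp hα).2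
      omega
    have h2 : (Mo m).card ≤ Fintype.card (Fin n → Fin (m+1)) := by
      rw [← Finset.card_univ]
      apply Finset.card_le_card_of_injOn
        (fun α => (fun j => (⟨α j % (m+1), Nat.mod_lt _ (by omega)⟩ : Fin (m+1))))
      · exact fun α _ => Finset.mem_univ _
      · intro α hα α' hα' hgg
        ext j
        have hv := congrArg Fin.val (congrFun hgg j)
        simp only at hv
        rw [Nat.mod_eq_of_lt (hcb α (Finset.mem_coe.mp hα) j),
          Nat.mod_eq_of_lt (hcb α' (Finset.mem_coe.mp hα') j)] at hv
        exact hv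
    calc (Mo m).card ≤ Fintype.card (Fin n → Fin (m+1)) := h2
      _ = (m+1)^n := by simp [Fintype.card_fun]
  have hM0 : 1 ≤ (Mo 0).card :=
    Finset.card_pos.mpr ⟨0, hMomem 0 0 (by simp [hdg])⟩
  -- iteration
  have hiter : ∀ t : ℕ, (D+1)^t ≤ D^t * (Mo (t*c)).card := by
    intro t
    induction t with
    | zero => simpa using hM0
    | succ t ih =>
      have step : (D+1) * (Mo (t*c)).card ≤ D * (Mo (t*c + c)).card := by
        calc (D+1) * (Mo (t*c)).card ≤ (D+1) * (D * (T (t*c)).card) :=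
              Nat.mul_le_mul_left _ (hfiber _)
          _ = D * ((D+1) * (T (t*c)).card) := by ring
          _ ≤ D * (s.card * (T (t*c)).card) :=
              Nat.mul_le_mul_left _ (Nat.mul_le_mul_right _ (by omega))
          _ ≤ D * (Mo (t*c + c)).card := Nat.mul_le_mul_left _ (hspan _)
      have harg : (t+1)*c = t*c + c := by ring
      calc (D+1)^(t+1) = (D+1)^t * (D+1) := pow_succ _ _
        _ ≤ (D^t * (Mo (t*c)).card) * (D+1) := Nat.mul_le_mul_right _ ih
        _ = D^t * ((D+1) * (Mo (t*c)).card) := by ring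
        _ ≤ D^t * (D * (Mo (t*c + c)).card) := Nat.mul_le_mul_left _ step
        _ = D^(t+1) * (Mo ((t+1)*c)).card := by rw [harg, pow_succ]; ring
  -- final contradiction
  obtain ⟨u, hu⟩ := aux_nat (D * n * c)
  have h1 : 2 ^ (n*u) * D ^ (D*(n*u)) ≤ (D+1) ^ (D*(n*u)) := by
    calc 2 ^ (n*u) * D ^ (D*(n*u)) = 2^(n*u) * (D^D)^(n*u) := by rw [← pow_mul]
      _ = (2 * D^D)^(n*u) := by rw [mul_pow]
      _ ≤ ((D+1)^D)^(n*u) := Nat.pow_le_pow_left (aux_two_mul D hD1) _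
      _ = (D+1)^(D*(n*u)) := by rw [← pow_mul]
  have h2 := hiter (D*(n*u))
  have h3 : (Mo ((D*(n*u))*c)).card ≤ ((D*(n*u))*c+1)^n := hMup _
  have h4 : 2 ^ (n*u) ≤ ((D*(n*u))*c+1)^n := by
    have hDt : 0 < D^(D*(n*u)) := Nat.pow_pos hD1
    have h5 : 2 ^ (n*u) * D ^ (D*(n*u)) ≤ ((D*(n*u))*c+1)^n * D ^ (D*(n*u)) := by
      calc 2 ^ (n*u) * D ^ (D*(n*u)) ≤ (D+1) ^ (D*(n*u)) := h1
        _ ≤ D^(D*(n*u)) * (Mo ((D*(n*u))*c)).card := h2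
        _ ≤ D^(D*(n*u)) * ((D*(n*u))*c+1)^n := Nat.mul_le_mul_left _ h3
        _ = ((D*(n*u))*c+1)^n * D ^ (D*(n*u)) := mul_comm _ _
    exact Nat.le_of_mul_le_mul_right h5 hDt
  have h6 : ((D*(n*u))*c+1)^n < 2^(n*u) := by
    have h7 : (D*(n*u))*c + 1 < 2^u := by
      have : (D*(n*u))*c = (D*n*c)*u := by ring
      omega
    calc ((D*(n*u))*c+1)^n < (2^u)^n := Nat.pow_lt_pow_left h7 (by omega)
      _ = 2^(n*u) := by rw [← pow_mul, Nat.mul_comm]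
  omega

/-- If `B = K[X₁,…,Xₙ]` (`n ≥ 1`, `K` a domain) and `F₁,…,Fₙ ∈ B` are algebraically
independent over `K`, with `A = K[F₁,…,Fₙ]`, then `Frac(B)` is a finite extension of
`Frac(A)` (realized as the subfield of `Frac(B)` generated by `K` and the `Fᵢ`) whose
separable degree is at most `∏ deg Fᵢ`. -/
theorem stmt_8 (K : Type*) [CommRing K] [IsDomain K] (n : ℕ) (hn : 0 < n)
    (F : Fin n → MvPolynomial (Fin n) K) (hF : AlgebraicIndependent K F) :
    let B := MvPolynomial (Fin n) K
    let L := FractionRing B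
    let E : Subfield L := Subfield.closure
      (Set.range ((algebraMap B L).comp (algebraMap K B)) ∪
        Set.range fun i => algebraMap B L (F i))
    FiniteDimensional E L ∧
      Field.finSepDegree E L ≤ ∏ i, (F i).totalDegree := by
  intro B L E
  classical
  set D : ℕ := ∏ i, (F i).totalDegree with hD
  have hdpos : ∀ i, 0 < (F i).totalDegree := by
    intro i
    rcases Nat.eq_zero_or_pos ((F i).totalDegree) with h | h
    · exfalso
      have h0 := (totalDegree_eq_zero_iff _ (F i)).mp h
      have hC : F i = C (coeff 0 (F i)) := by
        ext m
        rcases eq_or_ne m 0 with rfl | hm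
        · simp
        · rw [coeff_C, if_neg (Ne.symm hm)]
          by_contra hc
          exact hm (Finsupp.ext fun x => h0 m (by simpa [mem_support_iff] using hc) x)
      refine hF.transcendental i ?_
      rw [hC, ← MvPolynomial.algebraMap_eq]
      exact isAlgebraic_algebraMap _
    · exact h
  have hmemE : ∀ pol : MvPolynomial (Fin n) K, algebraMap B L (aeval F pol) ∈ E := by
    intro pol
    have h1 : aeval F pol ∈ Algebra.adjoin K (Set.range F) := by
      rw [Algebra.adjoin_range_eq_range_aeval]
      exact ⟨pol, rfl⟩
    have h2 : (Algebra.adjoin K (Set.range F)).toSubring ≤ E.toSubring.comap (algebraMap B L) := by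
      rw [Algebra.adjoin_eq_ring_closure]
      apply Subring.closure_le.mpr
      rintro x (⟨c, rfl⟩ | ⟨j, rfl⟩)
      · exact Subfield.subset_closure (Or.inl ⟨c, rfl⟩)
      · exact Subfield.subset_closure (Or.inr ⟨j, rfl⟩)
    exact h2 h1
  have key : ∀ s : Finset L, (LinearIndependent (↥E) fun i : ↥(s : Finset L) => (i : L)) →
      s.card ≤ D := fun s hs => aux_key hn F hF hdpos E hmemE s hs
  have hrank : Module.rank (↥E) L ≤ (D : Cardinal) := rank_le key
  have hnoeth : IsNoetherian (↥E) L :=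
    IsNoetherian.iff_rank_lt_aleph0.mpr (lt_of_le_of_lt hrank (Cardinal.nat_lt_aleph0 D))
  have hfin : FiniteDimensional (↥E) L := IsNoetherian.iff_fg.mp hnoeth
  exact ⟨hfin, (Field.finSepDegree_le_finrank _ _).trans (Module.finrank_le_of_rank_le hrank)⟩
end

section
/- Let A be a UFD with fraction field K, and let B be a domain containing A (via an injective ring homomorphism φ) such that: B is a flat A-module; φ maps prime elements of A to prime elements of B; and B* = φ(A*). If additionally B ⊗_A K = Frac(B) as a field extension of K of degree 1 (i.e., Frac(B) = K·φ(A) inside Frac(B)), then φ is an isomorphism. -/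
universe u v

open scoped BigOperators

universe w

lemma sum_ulift_fin_two {M : Type*} [AddCommMonoid M] (g : ULift.{w} (Fin 2) → M) :
    ∑ i, g i = g ⟨0⟩ + g ⟨1⟩ := by
  rw [← (Equiv.ulift (α := Fin 2)).symm.sum_comp g, Fin.sum_univ_two]; rfl

theorem flat_key {A : Type u} {B : Type v} [CommRing A] [IsDomain A]
    [UniqueFactorizationMonoid A] [CommRing B] [Algebra A B] [Module.Flat A B]
    {s a : A} {b : B} (hrel : IsRelPrime s a)
    (h : algebraMap A B s * b = algebraMap A B a) :
    IsUnit (algebraMap A B s) := by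
  classical
  letI : Algebra (ULift.{max u v} A) A :=
    (ULift.ringEquiv : ULift.{max u v} A ≃+* A).toRingHom.toAlgebra
  haveI : Module.Flat (ULift.{max u v} A) A :=
    Module.Flat.of_linearEquiv
      ({ toFun := ULift.up
         invFun := ULift.down
         left_inv := fun _ => rfl
         right_inv := fun _ => rfl
         map_add' := fun _ _ => rfl
         map_smul' := fun _ _ => rfl } : A ≃ₗ[ULift.{max u v} A] ULift.{max u v} A)
  haveI : IsScalarTower (ULift.{max u v} A) A (ULift.{max u v} B) :=
    ⟨fun c x y => by
      apply ULift.down_injective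
      show (c.down * x) • y.down = c.down • x • y.down
      rw [mul_smul]⟩
  haveI : Module.Flat (ULift.{max u v} A) (ULift.{max u v} B) :=
    @Module.Flat.trans (ULift.{max u v} A) A (ULift.{max u v} B) _ _ _ _ _ _
      ⟨fun c x y => this.smul_assoc c x y⟩ (by assumption) _
  set φ := algebraMap A B with hφ
  -- the relation
  let f : ULift.{max u v} (Fin 2) → ULift.{max u v} A := fun i => if i.down = 0 then ⟨s⟩ else ⟨-a⟩
  let x : ULift.{max u v} (Fin 2) → ULift.{max u v} B := fun i => if i.down = 0 then ⟨b⟩ else 1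
  have hsmul : ∀ (c : ULift.{max u v} A) (y : ULift.{max u v} B),
      (c • y).down = φ c.down * y.down := fun c y => by
    show c.down • y.down = φ c.down * y.down
    rw [Algebra.smul_def]
  have hrel0 : ∑ i, f i • x i = 0 := by
    apply ULift.down_injective
    rw [sum_ulift_fin_two.{max u v} (fun i => f i • x i)]
    show ((f ⟨0⟩ • x ⟨0⟩) + (f ⟨1⟩ • x ⟨1⟩)).down = (0 : B)
    have h0 : f ⟨0⟩ = ⟨s⟩ := rfl
    have h1 : f ⟨1⟩ = ⟨-a⟩ := rfl
    have h0' : x ⟨0⟩ = ⟨b⟩ := rfl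
    have h1' : x ⟨1⟩ = 1 := rfl
    rw [h0, h1, h0', h1']
    show ((⟨s⟩ : ULift A) • (⟨b⟩ : ULift B)).down + ((⟨-a⟩ : ULift A) • (1 : ULift B)).down = 0
    rw [hsmul, hsmul]
    show φ s * b + φ (-a) * 1 = 0
    rw [map_neg, mul_one, ← h]
    ring
  obtain ⟨κ, c, y, hx, hfc⟩ :=
    Module.Flat.isTrivialRelation_of_sum_smul_eq_zero hrel0
  -- from the coefficient relations, `s` divides each `(c ⟨1⟩ j).down`
  have hdvd : ∀ j, s ∣ (c ⟨1⟩ j).down := by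
    intro j
    have := hfc j
    rw [sum_ulift_fin_two.{max u v} (fun i => f i * c i j)] at this
    have hdown : s * (c ⟨0⟩ j).down + (-a) * (c ⟨1⟩ j).down = 0 :=
      congrArg ULift.down this
    have : a * (c ⟨1⟩ j).down = s * (c ⟨0⟩ j).down := by linear_combination -hdown
    exact hrel.dvd_of_dvd_mul_left ⟨(c ⟨0⟩ j).down, this⟩
  choose d hd using hdvd
  -- down the equation `1 = ∑ j, c ⟨1⟩ j • y j`
  have h1 : (1 : B) = ∑ j, φ (c ⟨1⟩ j).down * (y j).down := by
    have := hx ⟨1⟩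
    have := congrArg ULift.down this
    rw [show ((x ⟨1⟩) : ULift.{max u v} B) = 1 from rfl] at this
    calc (1 : B) = ((1 : ULift.{max u v} B)).down := rfl
      _ = (∑ j, c ⟨1⟩ j • y j).down := this
      _ = ∑ j, ((c ⟨1⟩ j • y j)).down := by
          exact map_sum (ULift.ringEquiv : ULift.{max u v} B ≃+* B).toRingHom.toAddMonoidHom
            (fun j => c ⟨1⟩ j • y j) Finset.univ
      _ = ∑ j, φ (c ⟨1⟩ j).down * (y j).down := by
          refine Finset.sum_congr rfl fun j _ => hsmul _ _
  have : (1 : B) = φ s * ∑ j, φ (d j) * (y j).down := by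
    rw [h1, Finset.mul_sum]
    refine Finset.sum_congr rfl fun j _ => ?_
    rw [hd j, map_mul]
    ring
  exact IsUnit.of_mul_eq_one _ this.symm

/-- Degree-one case of the UFD isomorphism theorem: if `A` is a UFD, `B` a domain,
`φ : A → B` injective with `B` flat over `A`, `φ` sends prime elements to prime elements,
`B* = φ(A*)`, and `Frac(B) = Frac(φ(A))` (every element of `Frac(B)` is a fraction of
elements of `φ(A)`, i.e. the extension has degree 1), then `φ` is an isomorphism. -/
theorem stmt_11 (A B : Type*) [CommRing A] [IsDomain A] [UniqueFactorizationMonoid A]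
    [CommRing B] [IsDomain B] [Algebra A B] [Module.Flat A B]
    (hinj : Function.Injective (algebraMap A B))
    (hprimes : ∀ a : A, Prime a → Prime (algebraMap A B a))
    (hunits : ∀ b : B, IsUnit b ↔ ∃ a : A, IsUnit a ∧ algebraMap A B a = b)
    (hdeg : ∀ x : FractionRing B, ∃ a s : A, s ≠ 0 ∧
      x = algebraMap B (FractionRing B) (algebraMap A B a) /
          algebraMap B (FractionRing B) (algebraMap A B s)) :
    Function.Bijective (algebraMap A B) := by
  refine ⟨hinj, fun b => ?_⟩
  set φ := algebraMap A B with hφ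
  set g := algebraMap B (FractionRing B) with hg
  have hginj : Function.Injective g := IsFractionRing.injective B (FractionRing B)
  obtain ⟨a, s, hs, hx⟩ := hdeg (g b)
  have hφs : φ s ≠ 0 := fun h0 => hs (hinj (h0.trans (map_zero φ).symm))
  have hgφs : g (φ s) ≠ 0 := fun h0 => hφs (hginj (h0.trans (map_zero g).symm))
  have heq : φ s * b = φ a := by
    apply hginj
    rw [map_mul]
    rw [eq_div_iff hgφs] at hx
    rw [mul_comm] at hx
    exact hx
  -- reduce the fraction
  obtain ⟨s', a', c, hrel, hcs, hca⟩ :=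
    UniqueFactorizationMonoid.exists_reduced_factors s hs a
  have hc : c ≠ 0 := fun h0 => hs (by rw [← hcs, h0, zero_mul])
  have hφc : φ c ≠ 0 := fun h0 => hc (hinj (h0.trans (map_zero φ).symm))
  have heq' : φ s' * b = φ a' := by
    have : φ c * (φ s' * b) = φ c * φ a' := by
      rw [← mul_assoc, ← map_mul, hcs, heq, ← map_mul, hca]
    exact mul_left_cancel₀ hφc this
  have hs' : s' ≠ 0 := fun h0 => hs (by rw [← hcs, h0, mul_zero])
  have hφs' : φ s' ≠ 0 := fun h0 => hs' (hinj (h0.trans (map_zero φ).symm))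
  -- `φ s'` is a unit, hence `s'` is a unit
  have hu : IsUnit (φ s') := flat_key hrel heq'
  obtain ⟨w, hwu, hw⟩ := (hunits (φ s')).mp hu
  have hws' : w = s' := hinj hw
  obtain ⟨v, hv⟩ := hwu
  -- then `b = φ (a' * v⁻¹)`
  refine ⟨a' * (↑v⁻¹ : A), ?_⟩
  have : φ s' * φ (a' * (↑v⁻¹ : A)) = φ s' * b := by
    rw [heq', ← map_mul]
    congr 1
    have : s' * (a' * (↑v⁻¹ : A)) = a' * (s' * ↑v⁻¹) := by ring
    rw [this, ← hws', ← hv, Units.mul_inv, mul_one]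
  exact mul_left_cancel₀ hφs' this
end

section
/- Let A ⊆ B be commutative domains with B flat over A, and suppose every prime element of A maps to a prime element of B and A* = A ∩ B*. Then for any two coprime elements p, q of A (meaning p and q have no common prime factor, A a UFD), if p/q ∈ B inside Frac(B), then q ∈ A*. -/
open TensorProduct LinearMap

/-- Let `A ⊆ B` be domains with `B` flat over the UFD `A`, prime elements of `A` mapping to
prime elements of `B`, and `A* = A ∩ B*`. If `p, q` are coprime elements of `A` and
`p/q ∈ B` (i.e. `φ(p) = b·φ(q)` for some `b ∈ B`), then `q` is a unit of `A`. -/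
theorem stmt_12 (A B : Type*) [CommRing A] [IsDomain A] [UniqueFactorizationMonoid A]
    [CommRing B] [IsDomain B] [Algebra A B] [Module.Flat A B]
    (hinj : Function.Injective (algebraMap A B))
    (hprimes : ∀ a : A, Prime a → Prime (algebraMap A B a))
    (hunits : ∀ a : A, IsUnit (algebraMap A B a) → IsUnit a)
    (p q : A) (hp : p ≠ 0) (hq : q ≠ 0)
    (hcop : ∀ r : A, Prime r → r ∣ p → ¬ r ∣ q)
    (b : B) (hb : algebraMap A B p = b * algebraMap A B q) :
    IsUnit q := by
  classical
  -- `q` and `p` are relatively prime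
  have hrel : IsRelPrime q p := by
    intro d hdq hdp
    by_contra hdu
    have hd0 : d ≠ 0 := fun h => hq (by simpa [h] using hdq)
    obtain ⟨r, hr, hrd⟩ := WfDvdMonoid.exists_irreducible_factor hdu hd0
    exact hcop r (UniqueFactorizationMonoid.irreducible_iff_prime.mp hr)
      (hrd.trans hdp) (hrd.trans hdq)
  -- the exact sequence A → A × A → A
  let f : A →ₗ[A] A × A := LinearMap.prod (q • LinearMap.id) (p • LinearMap.id)
  let g : A × A →ₗ[A] A := p • LinearMap.fst A A A - q • LinearMap.snd A A A
  have hexact : Function.Exact f g := by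
    intro z
    constructor
    · intro hz
      have hz' : p * z.1 = q * z.2 := by
        have h0 : p * z.1 - q * z.2 = 0 := by simpa [g, smul_eq_mul] using hz
        linear_combination h0
      have hqz : q ∣ z.1 := hrel.dvd_of_dvd_mul_right ⟨z.2, by linear_combination hz'⟩
      obtain ⟨c, hc⟩ := hqz
      refine ⟨c, ?_⟩
      have hz2 : z.2 = p * c := by
        have h0 : q * z.2 = q * (p * c) := by rw [← hz']; rw [hc]; ring
        exact mul_left_cancel₀ hq h0
      have : f c = (q * c, p * c) := by simp [f, smul_eq_mul]
      rw [this]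
      exact Prod.ext hc.symm hz2.symm
    · rintro ⟨c, rfl⟩
      simp [f, g, smul_eq_mul]; ring
  have hT : Function.Exact (f.lTensor B) (g.lTensor B) := Module.Flat.lTensor_exact B hexact
  -- the element (1, b) of B ⊗ (A × A)
  set t : B ⊗[A] (A × A) := (1 : B) ⊗ₜ ((1, 0) : A × A) + b ⊗ₜ ((0, 1) : A × A) with ht
  have htz : (g.lTensor B) t = 0 := by
    have h1 : (g.lTensor B) t = (1 : B) ⊗ₜ (g (1, 0)) + b ⊗ₜ (g (0, 1)) := by
      simp [t, lTensor_tmul]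
    have hg1 : g ((1 : A), (0 : A)) = p := by simp [g, smul_eq_mul]
    have hg2 : g ((0 : A), (1 : A)) = -q := by simp [g, smul_eq_mul]
    rw [h1, hg1, hg2]
    apply (TensorProduct.rid A B).injective
    simp [TensorProduct.rid_tmul, Algebra.smul_def, hb]
    ring
  obtain ⟨s, hs⟩ := (hT t).mp htz
  -- write s as c ⊗ 1
  set c : B := (TensorProduct.rid A B) s with hc
  have hs' : s = c ⊗ₜ (1 : A) := by
    rw [hc, ← TensorProduct.rid_symm_apply]
    simp
  -- compare first components using fst
  have hcmp := congrArg (LinearMap.lTensor B (LinearMap.fst A A A)) hs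
  rw [hs'] at hcmp
  have hL : (LinearMap.lTensor B (LinearMap.fst A A A)) ((f.lTensor B) (c ⊗ₜ (1 : A)))
      = c ⊗ₜ q := by
    simp [lTensor_tmul, f, smul_eq_mul]
  have hR : (LinearMap.lTensor B (LinearMap.fst A A A)) t = (1 : B) ⊗ₜ (1 : A) := by
    simp [t, lTensor_tmul]
  rw [hL, hR] at hcmp
  have : (TensorProduct.rid A B) (c ⊗ₜ q) = (TensorProduct.rid A B) ((1 : B) ⊗ₜ (1 : A)) := by
    rw [hcmp]
  simp [TensorProduct.rid_tmul, Algebra.smul_def] at this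
  exact hunits q (IsUnit.of_mul_eq_one c (by rw [this]))
end

section
/- Let A be a UFD with fraction field K and B a domain which is an A-algebra of finite type such that K ⊗_A B is a field, finite over K. Then there exists a nonzero a ∈ A and b ∈ B such that the localization B[1/a] is generated as an A[1/a]-algebra by the single element b. -/
open Polynomial

set_option maxHeartbeats 1000000

/-- If `A` is a UFD with fraction field `K` and `B` a domain of finite type over `A` such
that `K ⊗_A B` is a field, finite (and separable) over `K`, then `B` becomes monogenic over
`A` after inverting a single nonzero element `a` of `A`: there is `b ∈ B` such that every
element of `B[1/a]` is a polynomial in `b` with coefficients in `A[1/a]`, i.e. for every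
`x ∈ B` there are `n ∈ ℕ` and `P ∈ A[T]` with `a^n · x = P(b)`. -/
theorem stmt_15 (A B : Type*) [CommRing A] [IsDomain A] [UniqueFactorizationMonoid A]
    [CommRing B] [IsDomain B] [Algebra A B] [Algebra.FiniteType A B]
    (hfield : IsField (TensorProduct A (FractionRing A) B))
    (hfin : Module.Finite (FractionRing A) (TensorProduct A (FractionRing A) B))
    (hsep : Algebra.IsSeparable (FractionRing A) (TensorProduct A (FractionRing A) B)) :
    ∃ (a : A) (b : B), a ≠ 0 ∧ ∀ x : B, ∃ (n : ℕ) (P : Polynomial A),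
      (algebraMap A B a) ^ n * x = Polynomial.aeval b P := by
  classical
  set K := FractionRing A with hKdef
  set L := TensorProduct A K B with hLdef
  haveI : Nontrivial L := ⟨hfield.exists_pair_ne⟩
  let f : B →ₐ[A] L := Algebra.TensorProduct.includeRight
  -- `L` is the localization of `B` (as an `A`-module) at the nonzero elements of `A`
  haveI hloc : IsLocalizedModule (nonZeroDivisors A) (TensorProduct.mk A K B 1) :=
    (isLocalizedModule_iff_isBaseChange (nonZeroDivisors A) K _).2
      (TensorProduct.isBaseChange A B K)
  -- nonzero elements of `A` stay nonzero in `B`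
  have hAB : ∀ a : A, a ≠ 0 → algebraMap A B a ≠ 0 := by
    intro a ha h0
    have h1 : algebraMap A L a = 0 := by
      rw [← f.commutes, h0, map_zero]
    rw [IsScalarTower.algebraMap_apply A K L] at h1
    have h2 : algebraMap A K a ≠ 0 := fun h => ha (IsFractionRing.injective A K (by simpa using h))
    exact h2 ((algebraMap K L).injective (h1.trans (map_zero (algebraMap K L)).symm))
  -- `f` is injective
  have hfinj : Function.Injective f := by
    intro x y hxy
    have h0 : TensorProduct.mk A K B 1 (x - y) = 0 := by
      show f (x - y) = 0
      rw [map_sub, hxy, sub_self]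
    obtain ⟨s, hs⟩ := (IsLocalizedModule.eq_zero_iff (nonZeroDivisors A)
      (TensorProduct.mk A K B 1)).1 h0
    have hs' : algebraMap A B (s : A) * (x - y) = 0 := by
      rw [← Algebra.smul_def]; exact hs
    rcases mul_eq_zero.1 hs' with h | h
    · exact absurd h (hAB _ (nonZeroDivisors.coe_ne_zero s))
    · exact sub_eq_zero.1 h
  -- primitive element
  obtain ⟨θ, hadj⟩ : ∃ θ : L, Algebra.adjoin K {θ} = ⊤ := by
    letI : Field L := hfield.toField
    haveI : FiniteDimensional K L := hfin
    obtain ⟨θ, hθ⟩ := Field.exists_primitive_element K L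
    refine ⟨θ, ?_⟩
    have h := IntermediateField.adjoin_simple_toSubalgebra_of_isAlgebraic
      (IsIntegral.of_finite K θ).isAlgebraic
    rw [hθ] at h
    rw [← h, IntermediateField.top_toSubalgebra]
  -- every element of `L` becomes, after scaling by a nonzero element of `A`, in the image of `f`
  have hclear : ∀ z : L, ∃ (d : A) (c : B), d ≠ 0 ∧ d • z = f c := by
    intro z
    induction z using TensorProduct.induction_on with
    | zero => exact ⟨1, 0, one_ne_zero, by simp⟩
    | tmul k c =>
      obtain ⟨⟨n, d⟩, h⟩ := IsLocalization.surj (nonZeroDivisors A) k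
      refine ⟨(d : A), algebraMap A B n * c, nonZeroDivisors.coe_ne_zero d, ?_⟩
      show (d : A) • (k ⊗ₜ[A] c) = (1 : K) ⊗ₜ[A] (algebraMap A B n * c)
      calc (d : A) • (k ⊗ₜ[A] c : TensorProduct A K B)
          = ((d : A) • k) ⊗ₜ[A] c := TensorProduct.smul_tmul' _ _ _
        _ = (k * algebraMap A K (d : A)) ⊗ₜ[A] c := by rw [Algebra.smul_def, mul_comm]
        _ = (algebraMap A K n) ⊗ₜ[A] c := by rw [h]
        _ = (n • (1 : K)) ⊗ₜ[A] c := by rw [Algebra.algebraMap_eq_smul_one]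
        _ = (1 : K) ⊗ₜ[A] (n • c) := TensorProduct.smul_tmul _ _ _
        _ = (1 : K) ⊗ₜ[A] (algebraMap A B n * c) := by rw [Algebra.smul_def]
    | add x y hx hy =>
      obtain ⟨d1, c1, h1, e1⟩ := hx
      obtain ⟨d2, c2, h2, e2⟩ := hy
      refine ⟨d1 * d2, algebraMap A B d2 * c1 + algebraMap A B d1 * c2,
        mul_ne_zero h1 h2, ?_⟩
      rw [smul_add, map_add, map_mul, map_mul, f.commutes, f.commutes,
        ← Algebra.smul_def, ← Algebra.smul_def, ← e1, ← e2, mul_comm d1 d2,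
        mul_smul, mul_smul, smul_comm d1 d2 y]
  obtain ⟨d0, b, hd0, hb⟩ := hclear θ
  -- `f b` generates `L` over `K`
  have hbadj : Algebra.adjoin K {f b} = ⊤ := by
    rw [eq_top_iff, ← hadj]
    apply Algebra.adjoin_le
    intro z hz
    rw [Set.mem_singleton_iff] at hz
    rw [hz]
    have hd0K : algebraMap A K d0 ≠ 0 :=
      fun h => hd0 (IsFractionRing.injective A K (by simpa using h))
    have hθeq : θ = (algebraMap A K d0)⁻¹ • (f b) := by
      rw [← hb, ← algebraMap_smul K d0 θ, inv_smul_smul₀ hd0K]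
    rw [hθeq]
    exact Subalgebra.smul_mem _ (Algebra.self_mem_adjoin_singleton K _) _
  -- every element of `B`, times a suitable nonzero element of `A`, is a polynomial in `b`
  have key : ∀ x : B, ∃ (d : A) (P : A[X]), d ≠ 0 ∧ algebraMap A B d * x = aeval b P := by
    intro x
    have hmem : f x ∈ Algebra.adjoin K {f b} := hbadj ▸ Algebra.mem_top
    rw [Algebra.adjoin_singleton_eq_range_aeval] at hmem
    obtain ⟨Q, hQ⟩ := hmem
    have hQ' : aeval (f b) Q = f x := hQ
    obtain ⟨dQ, hdQ⟩ := IsLocalization.integerNormalization_map_to_map (nonZeroDivisors A) Q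
    refine ⟨(dQ : A), IsLocalization.integerNormalization (nonZeroDivisors A) Q,
      nonZeroDivisors.coe_ne_zero dQ, ?_⟩
    apply hfinj
    rw [map_mul, f.commutes, ← Polynomial.aeval_algHom_apply,
      ← Polynomial.aeval_map_algebraMap K, hdQ, ← algebraMap_smul K (dQ : A) Q,
      Polynomial.smul_eq_C_mul, map_mul, aeval_C, hQ',
      IsScalarTower.algebraMap_apply A K L]
  choose dd PP hdd hPP using key
  obtain ⟨s, hs⟩ : ∃ s : Finset B, Algebra.adjoin A (↑s : Set B) = ⊤ :=
    Algebra.FiniteType.out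
  refine ⟨∏ x ∈ s, dd x, b, Finset.prod_ne_zero_iff.2 (fun x _ => hdd x), ?_⟩
  set a : A := ∏ x ∈ s, dd x with ha
  let T : Subalgebra A B :=
    { carrier := {x | ∃ (n : ℕ) (P : A[X]), (algebraMap A B a) ^ n * x = aeval b P}
      mul_mem' := by
        rintro x y ⟨n, P, hP⟩ ⟨m, Q, hQ⟩
        exact ⟨n + m, P * Q, by rw [map_mul, ← hP, ← hQ, pow_add]; ring⟩
      one_mem' := ⟨0, 1, by simp⟩
      add_mem' := by
        rintro x y ⟨n, P, hP⟩ ⟨m, Q, hQ⟩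
        refine ⟨n + m, C (a ^ m) * P + C (a ^ n) * Q, ?_⟩
        rw [map_add, map_mul, map_mul, aeval_C, aeval_C, ← hP, ← hQ, map_pow, map_pow,
          pow_add]
        ring
      zero_mem' := ⟨0, 0, by simp⟩
      algebraMap_mem' := fun r => ⟨0, C r, by rw [pow_zero, one_mul, aeval_C]⟩ }
  have hsT : (↑s : Set B) ⊆ T := by
    intro x hx
    refine ⟨1, C (∏ y ∈ s.erase x, dd y) * PP x, ?_⟩
    rw [pow_one, map_mul, aeval_C, ← hPP x, ha, ← Finset.mul_prod_erase s dd hx, map_mul]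
    ring
  have hT : T = ⊤ := top_unique (hs ▸ Algebra.adjoin_le hsT)
  intro x
  have hx : x ∈ T := hT ▸ Algebra.mem_top
  exact hx
end

section
/- Let φ : A → B be a morphism of UFDs of characteristic p ≥ 0 which is flat, maps prime elements to prime elements, satisfies B* = φ(A*), and induces a finite separable extension Frac(φ(A)) ⊆ Frac(B) whose degree is not divisible by p. If additionally there exist a ∈ A \ {0} such that the induced map A[1/a] → B[1/φ(a)] is an isomorphism, then φ itself is an isomorphism. -/
/-!
Every divisor in `B` of an element `φ(y)`, `y ≠ 0`, lies in `φ(A)`: factor `y` into primes of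
`A`; their images are primes of `B`, so a divisor of `φ(y)` is a unit of `B` times a product of
some of these images, and units of `B` come from `A`. Surjectivity of `A[1/a] → B[1/φ(a)]` writes
any `b ∈ B` as `φ(a)^m * b = φ(x)`, so `b` divides `φ(x)` and hence lies in `φ(A)`.
-/

theorem exists_map_eq_of_dvd_map {A B F : Type*} [CommMonoidWithZero A]
    [UniqueFactorizationMonoid A] [CommMonoidWithZero B] [IsCancelMulZero B] [FunLike F A B]
    [MonoidWithZeroHomClass F A B] (f : F) (hprimes : ∀ q : A, Prime q → Prime (f q))
    (hunits : ∀ u : B, IsUnit u → ∃ x, f x = u) {y : A} (hy : y ≠ 0) {b : B}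
    (hb : b ∣ f y) : ∃ x, f x = b := by
  induction y using UniqueFactorizationMonoid.induction_on_prime generalizing b with
  | h₁ => exact absurd rfl hy
  | h₂ u hu => exact hunits b (isUnit_of_dvd_unit hb (hu.map f))
  | h₃ y q hy' hq ih =>
    rw [map_mul] at hb
    rcases (hprimes q hq).left_dvd_or_dvd_right_of_dvd_mul hb with ⟨b', rfl⟩ | hb
    · obtain ⟨x, rfl⟩ := ih hy' ((mul_dvd_mul_iff_left (hprimes q hq).ne_zero).mp hb)
      exact ⟨q * x, map_mul f q x⟩
    · exact ih hy' hb

theorem stmt_16_general (A B : Type*)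
    [CommRing A] [UniqueFactorizationMonoid A]
    [CommRing B] [IsDomain B] [Algebra A B]
    (hinj : Function.Injective (algebraMap A B))
    (hprimes : ∀ a : A, Prime a → Prime (algebraMap A B a))
    (hunits : ∀ b : B, IsUnit b ↔ ∃ a : A, IsUnit a ∧ algebraMap A B a = b)
    (a : A) (ha : a ≠ 0)
    (hiso : Function.Bijective
      (IsLocalization.Away.map (Localization.Away a)
        (Localization.Away (algebraMap A B a)) (algebraMap A B) a)) :
    Function.Bijective (algebraMap A B) := by
  refine ⟨hinj, fun b => ?_⟩
  obtain rfl | hb := eq_or_ne b 0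
  · exact ⟨0, map_zero _⟩
  obtain ⟨x, m, hx⟩ := (IsLocalization.Away.map_surjective_iff _ _ _ _).mp hiso.2 b
  have ham : algebraMap A B a ^ m ≠ 0 :=
    pow_ne_zero m ((map_ne_zero_iff _ hinj).mpr ha)
  have hx0 : x ≠ 0 := by
    rintro rfl
    exact mul_ne_zero ham hb (by rw [← hx, map_zero])
  exact exists_map_eq_of_dvd_map (algebraMap A B) hprimes
    (fun u hu => ((hunits u).mp hu).imp fun _ => And.right) hx0 (Dvd.intro_left _ hx.symm)

/-- Final step of the UFD isomorphism theorem: let `φ : A → B` be a morphism of UFDs of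
characteristic `p` (`p = 0` or prime) which is injective and flat, maps prime elements to
prime elements, satisfies `B* = φ(A*)`, and induces a finite separable extension
`Frac(A) ⊆ Frac(B)` of degree not divisible by `p`. If moreover there is `a ≠ 0` in `A`
such that the induced map `A[1/a] → B[1/φ(a)]` is an isomorphism, then `φ` is an
isomorphism. -/
theorem stmt_16 (p : ℕ) (hp : p = 0 ∨ p.Prime) (A B : Type*)
    [CommRing A] [IsDomain A] [UniqueFactorizationMonoid A]
    [CommRing B] [IsDomain B] [UniqueFactorizationMonoid B]
    [CharP A p] [CharP B p] [Algebra A B] [Module.Flat A B]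
    (hinj : Function.Injective (algebraMap A B))
    (hprimes : ∀ a : A, Prime a → Prime (algebraMap A B a))
    (hunits : ∀ b : B, IsUnit b ↔ ∃ a : A, IsUnit a ∧ algebraMap A B a = b)
    [NoZeroSMulDivisors A (FractionRing B)]
    (hext : letI : Algebra (FractionRing A) (FractionRing B) :=
        FractionRing.liftAlgebra A (FractionRing B)
      FiniteDimensional (FractionRing A) (FractionRing B) ∧
        Algebra.IsSeparable (FractionRing A) (FractionRing B) ∧
        ¬ p ∣ Module.finrank (FractionRing A) (FractionRing B))
    (a : A) (ha : a ≠ 0)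
    (hiso : Function.Bijective
      (IsLocalization.Away.map (Localization.Away a)
        (Localization.Away (algebraMap A B a)) (algebraMap A B) a)) :
    Function.Bijective (algebraMap A B) :=
  stmt_16_general A B hinj hprimes hunits a ha hiso
end

section
/- Let K be a field, B a K-algebra, and suppose Ω_{B/K} = 0 with B finite-dimensional over K. Then for every field extension L of K, the ring B ⊗_K L is reduced. -/
open TensorProduct

/-- A finite-dimensional `K`-algebra with vanishing Kähler differentials is geometrically
reduced: `B ⊗_K L` is reduced for every field extension `L` of `K`. -/
theorem stmt_19 (K B : Type*) [Field K] [CommRing B] [Algebra K B]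
    [FiniteDimensional K B] [Subsingleton (Ω[B⁄K])]
    (L : Type*) [Field L] [Algebra K L] :
    IsReduced (TensorProduct K B L) := by
  haveI h1 : Algebra.FormallyUnramified K B := ⟨‹_›⟩
  haveI h2 : Algebra.EssFiniteType K B :=
    Algebra.EssFiniteType.of_finiteType K B
  -- work with L ⊗[K] B instead
  letI A := L ⊗[K] B
  haveI hu : Algebra.FormallyUnramified L A := inferInstance
  haveI he : Algebra.EssFiniteType L A := Algebra.EssFiniteType.baseChange K B L
  -- fix universes by replacing the base field `L` with a `ULift`
  haveI : IsReduced A := by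
    letI e : ULift.{0, _} L ≃+* L := ULift.ringEquiv
    letI Lu := ULift.{0, _} L
    letI : Algebra Lu L := e.toRingHom.toAlgebra
    letI : Algebra Lu A := ((algebraMap L A).comp e.toRingHom).toAlgebra
    haveI ht := IsScalarTower.of_algebraMap_eq (R := Lu) (S := L) (A := A) fun _ => rfl
    haveI : Algebra.FormallyUnramified Lu L :=
      Algebra.FormallyUnramified.of_surjective (Algebra.ofId Lu L) e.surjective
    haveI : Algebra.FiniteType Lu L :=
      Algebra.FiniteType.of_surjective (Algebra.ofId Lu L)
        e.surjective
    haveI : Algebra.EssFiniteType Lu L := Algebra.EssFiniteType.of_finiteType Lu L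
    haveI : Algebra.FormallyUnramified Lu A := Algebra.FormallyUnramified.comp Lu L A
    haveI : Algebra.EssFiniteType Lu A := Algebra.EssFiniteType.comp Lu L A
    exact Algebra.FormallyUnramified.isReduced_of_field Lu A
  exact isReduced_of_injective (Algebra.TensorProduct.comm K B L).toRingHom
    (Algebra.TensorProduct.comm K B L).injective
end
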